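/- arXiv:1903.09259 — 8 statements merged into one kernel-verified Lean document; each statement's English description precedes it below -/
import Mathlib

section
/- If the visibility graph G on a finite set of planar points is connected, then the effective neighbourhood (relative neighbourhood) subgraph G^e is connected. -/
/-- The visibility graph: edge iff distinct and within distance `V`. -/
def visGraph (n : ℕ) (p : Fin n → EuclideanSpace ℝ (Fin 2)) (V : ℝ) :
    SimpleGraph (Fin n) :=
  SimpleGraph.fromRel (fun i j => ‖p i - p j‖ ≤ V)

/-- The effective (relative neighbourhood) subgraph of the visibility graph. -/
def effGraph (n : ℕ) (p : Fin n → EuclideanSpace ℝ (Fin 2)) (V : ℝ) :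
    SimpleGraph (Fin n) :=
  SimpleGraph.fromRel (fun i j => ‖p i - p j‖ ≤ V ∧
    ¬ ∃ k : Fin n, ‖p i - p k‖ < ‖p i - p j‖ ∧ ‖p j - p k‖ < ‖p i - p j‖)

/-- if the visibility graph is connected then so is `G^e`. -/
theorem effGraph_connected (n : ℕ) (p : Fin n → EuclideanSpace ℝ (Fin 2))
    (V : ℝ) (hV : 0 < V) (hconn : (visGraph n p V).Connected) :
    (effGraph n p V).Connected := by
  classical
  set m : Fin n → Fin n → ℕ := fun i j =>
    (Finset.univ.filter (fun q : Fin n × Fin n => ‖p q.1 - p q.2‖ < ‖p i - p j‖)).card with hm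
  have key : ∀ N : ℕ, ∀ i j : Fin n, m i j < N → (visGraph n p V).Adj i j →
      (effGraph n p V).Reachable i j := by
    intro N
    induction N with
    | zero => intro i j h; omega
    | succ N ih =>
      intro i j hmN hadj
      obtain ⟨hne, hle⟩ := hadj
      have hleV : ‖p i - p j‖ ≤ V := by
        rcases hle with h | h
        · exact h
        · rwa [norm_sub_rev]
      by_cases h : ∃ k : Fin n, ‖p i - p k‖ < ‖p i - p j‖ ∧ ‖p j - p k‖ < ‖p i - p j‖
      · obtain ⟨k, hk1, hk2⟩ := h
        have hki : k ≠ i := by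
          rintro rfl
          rw [norm_sub_rev] at hk2
          exact lt_irrefl _ hk2
        have hkj : k ≠ j := by
          rintro rfl
          exact lt_irrefl _ hk1
        have hadjik : (visGraph n p V).Adj i k :=
          ⟨Ne.symm hki, Or.inl (le_of_lt (lt_of_lt_of_le hk1 hleV))⟩
        have hadjkj : (visGraph n p V).Adj k j := by
          refine ⟨hkj, Or.inl ?_⟩
          show ‖p k - p j‖ ≤ V
          rw [norm_sub_rev]
          exact le_of_lt (lt_of_lt_of_le hk2 hleV)
        have hsub : ∀ a b : Fin n, ‖p a - p b‖ < ‖p i - p j‖ → m a b < m i j := by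
          intro a b hab
          apply Finset.card_lt_card
          constructor
          · intro q hq
            simp only [Finset.mem_filter, Finset.mem_univ, true_and] at hq ⊢
            exact lt_trans hq hab
          · intro hcon
            have := hcon (Finset.mem_filter.mpr ⟨Finset.mem_univ (a, b), hab⟩)
            simp only [Finset.mem_filter] at this
            exact lt_irrefl _ this.2
        have h1 : m i k < m i j := hsub i k hk1
        have h2 : m k j < m i j := by
          apply hsub
          rw [norm_sub_rev]
          exact hk2
        have r1 := ih i k (by omega) hadjik
        have r2 := ih k j (by omega) hadjkj
        exact r1.trans r2
      · exact SimpleGraph.Adj.reachable ⟨hne, Or.inl ⟨hleV, h⟩⟩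
  haveI := hconn.nonempty
  refine ⟨fun i j => ?_⟩
  obtain ⟨w⟩ := hconn.preconnected i j
  induction w with
  | nil => exact SimpleGraph.Reachable.refl _
  | cons hadj _ ihw =>
    exact (key (m _ _ + 1) _ _ (Nat.lt_succ_self _) hadj).trans ihw
end

section
/- One-step connectivity preservation: let positions p : Fin n → ℝ² have connected visibility graph G (edges at distance ≤ V), and let q : Fin n → ℝ² be new positions such that for every edge {i,j} of the effective subgraph G^e, both q_i and q_j lie in the disc of radius V/2 centered at (p_i + p_j)/2. Then the visibility graph of q is connected. -/
lemma eff_reachable (n : ℕ) (p : Fin n → EuclideanSpace ℝ (Fin 2)) (V : ℝ) :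
    ∀ i j : Fin n, ‖p i - p j‖ ≤ V → (effGraph n p V).Reachable i j := by
  classical
  -- measure: number of pairs with strictly smaller distance
  set m : Fin n → Fin n → ℕ := fun i j =>
    (Finset.univ.filter (fun kl : Fin n × Fin n => ‖p kl.1 - p kl.2‖ < ‖p i - p j‖)).card
    with hm
  suffices h : ∀ N : ℕ, ∀ i j : Fin n, m i j ≤ N → ‖p i - p j‖ ≤ V →
      (effGraph n p V).Reachable i j by
    intro i j hij; exact h (m i j) i j le_rfl hij
  intro N
  induction N with
  | zero =>
    intro i j h0 hij
    by_cases hij' : i = j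
    · subst hij'; exact SimpleGraph.Reachable.refl i
    by_cases hk : ∃ k : Fin n, ‖p i - p k‖ < ‖p i - p j‖ ∧ ‖p j - p k‖ < ‖p i - p j‖
    · exfalso
      obtain ⟨k, hk1, hk2⟩ := hk
      have : (i, k) ∈ (Finset.univ.filter
          (fun kl : Fin n × Fin n => ‖p kl.1 - p kl.2‖ < ‖p i - p j‖)) := by
        simp [hk1]
      have hcp := Finset.card_pos.mpr ⟨_, this⟩
      simp only [hm] at h0
      omega
    · exact SimpleGraph.Adj.reachable (by
        simp only [effGraph, SimpleGraph.fromRel_adj]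
        exact ⟨hij', Or.inl ⟨hij, hk⟩⟩)
  | succ N ih =>
    intro i j hN hij
    by_cases hij' : i = j
    · subst hij'; exact SimpleGraph.Reachable.refl i
    by_cases hk : ∃ k : Fin n, ‖p i - p k‖ < ‖p i - p j‖ ∧ ‖p j - p k‖ < ‖p i - p j‖
    · obtain ⟨k, hk1, hk2⟩ := hk
      have hsub : ∀ a b : Fin n, (Finset.univ.filter
          (fun kl : Fin n × Fin n => ‖p kl.1 - p kl.2‖ < ‖p a - p b‖)).card < m i j →
          ‖p a - p b‖ < ‖p i - p j‖ → True := fun _ _ _ _ => trivial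
      have key : ∀ a b : Fin n, ‖p a - p b‖ < ‖p i - p j‖ → m a b < m i j := by
        intro a b hab
        have hss : (Finset.univ.filter
            (fun kl : Fin n × Fin n => ‖p kl.1 - p kl.2‖ < ‖p a - p b‖)) ⊂
            (Finset.univ.filter
            (fun kl : Fin n × Fin n => ‖p kl.1 - p kl.2‖ < ‖p i - p j‖)) := by
          constructor
          · intro x hx
            simp only [Finset.mem_filter, Finset.mem_univ, true_and] at hx ⊢
            exact hx.trans hab
          · intro hcon
            have : (a, b) ∈ (Finset.univ.filter
                (fun kl : Fin n × Fin n => ‖p kl.1 - p kl.2‖ < ‖p a - p b‖)) :=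
              hcon (by simp [hab])
            simp at this
        exact Finset.card_lt_card hss
      have h1 : m i k < m i j := key i k hk1
      have h2 : m k j < m i j := by
        have : ‖p k - p j‖ < ‖p i - p j‖ := by
          rwa [norm_sub_rev] at hk2
        exact key k j this
      have r1 := ih i k (by omega) (le_of_lt (lt_of_lt_of_le hk1 hij))
      have r2 := ih k j (by omega) (le_of_lt (lt_of_lt_of_le (by rwa [norm_sub_rev] at hk2) hij))
      exact r1.trans r2
    · exact SimpleGraph.Adj.reachable (by
        simp only [effGraph, SimpleGraph.fromRel_adj]
        exact ⟨hij', Or.inl ⟨hij, hk⟩⟩)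

/-- one-step connectivity preservation. -/
theorem one_step_connectivity (n : ℕ) (p q : Fin n → EuclideanSpace ℝ (Fin 2))
    (V : ℝ) (hV : 0 < V) (hconn : (visGraph n p V).Connected)
    (hmove : ∀ i j : Fin n, (effGraph n p V).Adj i j →
      q i ∈ Metric.closedBall (midpoint ℝ (p i) (p j)) (V / 2) ∧
      q j ∈ Metric.closedBall (midpoint ℝ (p i) (p j)) (V / 2)) :
    (visGraph n q V).Connected := by
  -- effective edges become edges of visGraph q
  have hle : effGraph n p V ≤ visGraph n q V := by
    intro i j hij
    obtain ⟨hqi, hqj⟩ := hmove i j hij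
    have hne : i ≠ j := hij.ne
    have hdist : ‖q i - q j‖ ≤ V := by
      have h1 : dist (q i) (midpoint ℝ (p i) (p j)) ≤ V / 2 := Metric.mem_closedBall.mp hqi
      have h2 : dist (q j) (midpoint ℝ (p i) (p j)) ≤ V / 2 := Metric.mem_closedBall.mp hqj
      calc ‖q i - q j‖ = dist (q i) (q j) := (dist_eq_norm _ _).symm
        _ ≤ dist (q i) (midpoint ℝ (p i) (p j)) + dist (midpoint ℝ (p i) (p j)) (q j) :=
            dist_triangle _ _ _
        _ ≤ V / 2 + V / 2 := add_le_add h1 (by rwa [dist_comm])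
        _ = V := by ring
    simp only [visGraph, SimpleGraph.fromRel_adj]
    exact ⟨hne, Or.inl hdist⟩
  -- effGraph p is connected
  haveI : Nonempty (Fin n) := hconn.nonempty
  have heff : (effGraph n p V).Connected := by
    constructor
    intro u v
    have := hconn.preconnected u v
    induction this with
    | _ w => ?_
    induction w with
    | nil => exact SimpleGraph.Reachable.refl _
    | cons h w' ih =>
      rename_i a b c
      have hab : ‖p a - p b‖ ≤ V := by
        simp only [visGraph, SimpleGraph.fromRel_adj] at h
        rcases h.2 with h' | h'
        · exact h'
        · rwa [norm_sub_rev] at h'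
      exact (eff_reachable n p V a b hab).trans ih
  exact ⟨fun u v => (heff.preconnected u v).mono hle⟩
end

section
/- Iterated connectivity: if p(0) has connected visibility graph and for each time t every agent moves to a point in its effective allowable region AR^e_i(t) = ⋂_{j ∈ N^e_i(t)} D_{V/2}((p_i(t)+p_j(t))/2), then the visibility graph at every time t is connected. -/
/-- The effective allowable region `AR^e_i`. -/
def effAllowableRegion (n : ℕ) (p : Fin n → EuclideanSpace ℝ (Fin 2)) (V : ℝ)
    (i : Fin n) : Set (EuclideanSpace ℝ (Fin 2)) :=
  ⋂ j ∈ {j : Fin n | (effGraph n p V).Adj i j},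
    Metric.closedBall (midpoint ℝ (p i) (p j)) (V / 2)

lemma eff_reach_aux (n : ℕ) (p : Fin n → EuclideanSpace ℝ (Fin 2)) (V : ℝ) :
    ∀ m : ℕ, ∀ i j : Fin n,
      (Finset.univ.filter (fun q : Fin n × Fin n => ‖p q.1 - p q.2‖ < ‖p i - p j‖)).card ≤ m →
      i ≠ j → ‖p i - p j‖ ≤ V → (effGraph n p V).Reachable i j := by
  intro m
  induction m with
  | zero =>
    intro i j hc hij hV
    refine SimpleGraph.Adj.reachable ?_
    refine ⟨hij, Or.inl ⟨hV, ?_⟩⟩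
    rintro ⟨k, hk1, hk2⟩
    have : (⟨i, k⟩ : Fin n × Fin n) ∈
        Finset.univ.filter (fun q : Fin n × Fin n => ‖p q.1 - p q.2‖ < ‖p i - p j‖) := by
      simp [hk1]
    have := Finset.card_pos.mpr ⟨_, this⟩
    omega
  | succ m ih =>
    intro i j hc hij hV
    by_cases hk : ∃ k : Fin n, ‖p i - p k‖ < ‖p i - p j‖ ∧ ‖p j - p k‖ < ‖p i - p j‖
    · obtain ⟨k, hk1, hk2⟩ := hk
      have hki : k ≠ i := by
        rintro rfl
        rw [norm_sub_rev] at hk2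
        exact lt_irrefl _ hk2
      have hkj : k ≠ j := by
        rintro rfl
        exact lt_irrefl _ hk1
      have hsub1 : ∀ a b : Fin n, ‖p a - p b‖ < ‖p i - p j‖ →
          (Finset.univ.filter (fun q : Fin n × Fin n => ‖p q.1 - p q.2‖ < ‖p a - p b‖)).card ≤ m := by
        intro a b hd
        have hss : (Finset.univ.filter (fun q : Fin n × Fin n => ‖p q.1 - p q.2‖ < ‖p a - p b‖)) ⊂
            (Finset.univ.filter (fun q : Fin n × Fin n => ‖p q.1 - p q.2‖ < ‖p i - p j‖)) := by
          refine Finset.ssubset_iff_of_subset ?_ |>.mpr ⟨⟨a, b⟩, ?_, ?_⟩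
          · intro q hq
            simp only [Finset.mem_filter, Finset.mem_univ, true_and] at hq ⊢
            exact lt_trans hq hd
          · simp [hd]
          · simp
        have := Finset.card_lt_card hss
        omega
      have h1 : (effGraph n p V).Reachable i k :=
        ih i k (hsub1 i k hk1) (Ne.symm hki) (le_of_lt (lt_of_lt_of_le hk1 hV))
      have h2 : (effGraph n p V).Reachable j k := by
        refine ih j k ?_ (Ne.symm hkj) (le_of_lt (lt_of_lt_of_le hk2 hV))
        exact hsub1 j k hk2
      exact h1.trans h2.symm
    · exact SimpleGraph.Adj.reachable ⟨hij, Or.inl ⟨hV, hk⟩⟩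

/-- iterated connectivity under the motion law. -/
theorem iterated_connectivity (n : ℕ) (p : ℕ → Fin n → EuclideanSpace ℝ (Fin 2))
    (V : ℝ) (hV : 0 < V) (h0 : (visGraph n (p 0) V).Connected)
    (hmove : ∀ t : ℕ, ∀ i : Fin n, p (t + 1) i ∈ effAllowableRegion n (p t) V i) :
    ∀ t : ℕ, (visGraph n (p t) V).Connected := by
  intro t
  induction t with
  | zero => exact h0
  | succ t ihh =>
    have heff : (effGraph n (p t) V).Connected := by
      have hpre : (effGraph n (p t) V).Preconnected := by
        intro i j
        obtain ⟨w⟩ := ihh.preconnected i j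
        induction w with
        | nil => exact SimpleGraph.Reachable.refl _
        | @cons a b c h w ih =>
          refine SimpleGraph.Reachable.trans ?_ ih
          rw [visGraph, SimpleGraph.fromRel_adj] at h
          obtain ⟨hne, hr⟩ := h
          have hle : ‖p t a - p t b‖ ≤ V := by
            rcases hr with h | h
            · exact h
            · rw [norm_sub_rev]; exact h
          exact eff_reach_aux n (p t) V _ a b le_rfl hne hle
      have : Nonempty (Fin n) := ihh.nonempty
      exact ⟨hpre⟩
    have hmono : effGraph n (p t) V ≤ visGraph n (p (t + 1)) V := by
      intro i j hadj
      have hmid : p (t + 1) i ∈ Metric.closedBall (midpoint ℝ (p t i) (p t j)) (V / 2) :=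
        Set.mem_iInter₂.mp (hmove t i) j hadj
      have hmid' : p (t + 1) j ∈ Metric.closedBall (midpoint ℝ (p t i) (p t j)) (V / 2) := by
        have := Set.mem_iInter₂.mp (hmove t j) i hadj.symm
        rwa [midpoint_comm] at this
      rw [Metric.mem_closedBall] at hmid hmid'
      refine ⟨hadj.ne, Or.inl ?_⟩
      show ‖p (t + 1) i - p (t + 1) j‖ ≤ V
      rw [← dist_eq_norm]
      calc dist (p (t + 1) i) (p (t + 1) j)
          ≤ dist (p (t + 1) i) (midpoint ℝ (p t i) (p t j))
            + dist (midpoint ℝ (p t i) (p t j)) (p (t + 1) j) := dist_triangle _ _ _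
        _ ≤ V / 2 + V / 2 := by
            have := hmid'
            rw [dist_comm] at this
            exact add_le_add hmid this
        _ = V := by ring
    exact heff.mono hmono
end

section
/- In the relative neighbourhood graph on a finite planar point set with pairwise distinct distances, if {i,k} and {j,k} are both edges with i ≠ j, then the angle ∠ i k j is strictly greater than π/3. -/
/-- The relative neighbourhood graph on the point set `p`. -/
def rngGraph (n : ℕ) (p : Fin n → EuclideanSpace ℝ (Fin 2)) : SimpleGraph (Fin n) :=
  SimpleGraph.fromRel (fun i j =>
    ¬ ∃ k : Fin n, ‖p i - p k‖ < ‖p i - p j‖ ∧ ‖p j - p k‖ < ‖p i - p j‖)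

lemma rng_edge_prop {n : ℕ} {p : Fin n → EuclideanSpace ℝ (Fin 2)} {j k : Fin n}
    (h : (rngGraph n p).Adj j k) (m : Fin n)
    (h1 : dist (p j) (p m) < dist (p j) (p k))
    (h2 : dist (p k) (p m) < dist (p j) (p k)) : False := by
  simp only [rngGraph, SimpleGraph.fromRel_adj, not_exists, not_and] at h
  simp only [← dist_eq_norm] at h
  rcases h.2 with h' | h'
  · exact absurd h2 (not_lt.2 (le_of_not_gt fun hh => (h' m h1 hh).elim))
  · have := h' m
    rw [dist_comm (p k) (p j)] at this
    exact (this h2 h1).elim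

lemma rng_cos_lt {n : ℕ} {p : Fin n → EuclideanSpace ℝ (Fin 2)} {i j k : Fin n}
    (hinj : Function.Injective p)
    (hik : (rngGraph n p).Adj i k) (hjk : (rngGraph n p).Adj j k)
    (hab : dist (p i) (p k) < dist (p j) (p k)) :
    Real.cos (EuclideanGeometry.angle (p i) (p k) (p j)) < 1 / 2 := by
  set a := dist (p i) (p k) with ha
  set b := dist (p j) (p k) with hb
  have hik' : i ≠ k := hik.ne
  have ha0 : 0 < a := dist_pos.2 fun h => hik' (hinj h)
  have hb0 : 0 < b := lt_trans ha0 hab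
  -- d(i,j) ≥ b
  have hc : b ≤ dist (p i) (p j) := by
    by_contra hlt
    push_neg at hlt
    refine rng_edge_prop hjk i ?_ ?_
    · rw [dist_comm (p j) (p i)]; exact hlt
    · rw [dist_comm (p k) (p i)]; exact hab
  have hlaw := EuclideanGeometry.law_cos (p i) (p k) (p j)
  rw [← ha, ← hb] at hlaw
  have hc2 : b ^ 2 ≤ dist (p i) (p j) ^ 2 :=
    pow_le_pow_left₀ hb0.le hc 2
  nlinarith [hlaw, hc2, mul_pos ha0 hb0]

/-- in the RNG with pairwise distinct distances, two edges sharing a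
vertex `k` make an angle strictly greater than `π/3` at `k`. -/
theorem rng_angle_gt_pi_div_three (n : ℕ) (p : Fin n → EuclideanSpace ℝ (Fin 2))
    (hinj : Function.Injective p)
    (hdist : ∀ i j k l : Fin n, i ≠ j → k ≠ l →
      dist (p i) (p j) = dist (p k) (p l) → (i = k ∧ j = l) ∨ (i = l ∧ j = k))
    (i j k : Fin n) (hij : i ≠ j)
    (hik : (rngGraph n p).Adj i k) (hjk : (rngGraph n p).Adj j k) :
    Real.pi / 3 < EuclideanGeometry.angle (p i) (p k) (p j) := by
  have hik' : i ≠ k := hik.ne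
  have hjk' : j ≠ k := hjk.ne
  have hne : dist (p i) (p k) ≠ dist (p j) (p k) := by
    intro h
    rcases hdist i k j k hik' hjk' h with ⟨h1, _⟩ | ⟨h1, h2⟩
    · exact hij h1
    · exact hik' h1
  have hcos : Real.cos (EuclideanGeometry.angle (p i) (p k) (p j)) < 1 / 2 := by
    rcases lt_or_gt_of_ne hne with h | h
    · exact rng_cos_lt hinj hik hjk h
    · rw [EuclideanGeometry.angle_comm]
      exact rng_cos_lt hinj hjk hik h
  by_contra hle
  push_neg at hle
  have h0 : (0:ℝ) ≤ EuclideanGeometry.angle (p i) (p k) (p j) :=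
    EuclideanGeometry.angle_nonneg _ _ _
  have hpi : Real.pi / 3 ≤ Real.pi := by linarith [Real.pi_pos]
  have := Real.cos_le_cos_of_nonneg_of_le_pi h0 hpi hle
  rw [Real.cos_pi_div_three] at this
  linarith
end

section
/- In the relative neighbourhood graph on a finite planar point set with pairwise distinct distances, every vertex has degree at most 5. -/
/-!
Two distinct neighbours `j`, `k` of a vertex `i` satisfy `|p_j - p_i| < |p_j - p_k|` and
`|p_k - p_i| < |p_j - p_k|` (distinct distances make the defining condition strict), so by the
law of cosines the angle `∠ p_j p_i p_k` exceeds `π / 3`. Sorting the directions of six vectors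
around the origin, some two consecutive ones (cyclically) are at most `2π / 6 = π / 3` apart.
-/

open Real InnerProductGeometry Module

theorem Real.Angle.exists_ne_abs_toReal_sub_le (θ : Fin 6 → Real.Angle) :
    ∃ a b, a ≠ b ∧ |(θ a - θ b).toReal| ≤ π / 3 := by
  by_contra! h
  set t : Fin 6 → ℝ := fun a => (θ a).toReal
  have ht : ∀ a b, θ a - θ b = ((t a - t b : ℝ) : Real.Angle) := by
    simp [t, Real.Angle.coe_sub, Real.Angle.coe_toReal]
  set σ := Tuple.sort t
  have gap : ∀ a b : Fin 6, a < b → t (σ a) + π / 3 < t (σ b) := by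
    intro a b hab
    have hle : t (σ a) ≤ t (σ b) := Tuple.monotone_sort t hab.le
    by_contra! hgap
    have := h (σ a) (σ b) (σ.injective.ne hab.ne)
    rw [ht, Real.Angle.toReal_coe_eq_self_iff.2 ⟨by linarith [pi_pos], by linarith [pi_pos]⟩,
      abs_of_nonpos (by linarith)] at this
    linarith
  have hspan : t (σ 0) + 5 * π / 3 < t (σ 5) := by
    linarith [gap 0 1 (by decide), gap 1 2 (by decide), gap 2 3 (by decide), gap 3 4 (by decide),
      gap 4 5 (by decide)]
  have hlo := (θ (σ 0)).toReal_mem_Ioc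
  have hhi := (θ (σ 5)).toReal_mem_Ioc
  -- going once around the circle, the last gap `σ 5 → σ 0` is shorter than `π / 3`
  have hwrap : ((t (σ 0) - t (σ 5) : ℝ) : Real.Angle) =
      ((t (σ 0) - t (σ 5) + 2 * π : ℝ) : Real.Angle) := by
    rw [Real.Angle.coe_add, Real.Angle.coe_two_pi, add_zero]
  have := h (σ 0) (σ 5) (σ.injective.ne (by decide))
  rw [ht, hwrap,
    Real.Angle.toReal_coe_eq_self_iff.2 ⟨by linarith [hlo.1, hhi.2], by linarith [pi_pos]⟩,
    abs_of_pos (by linarith [hlo.1, hhi.2])] at this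
  linarith

section Plane

variable {V : Type*} [NormedAddCommGroup V] [InnerProductSpace ℝ V]

theorem InnerProductGeometry.pi_div_three_lt_angle_of_norm_lt_norm_sub {x y : V}
    (hx : ‖x‖ < ‖x - y‖) (hy : ‖y‖ < ‖x - y‖) : π / 3 < angle x y := by
  by_contra! h
  have hcos : 1 / 2 ≤ Real.cos (angle x y) := by
    rw [← cos_pi_div_three]
    exact cos_le_cos_of_nonneg_of_le_pi (angle_nonneg x y) (by linarith [pi_pos]) h
  have hlaw := norm_sub_sq_eq_norm_sq_add_norm_sq_sub_two_mul_norm_mul_norm_mul_cos_angle x y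
  have hle : ‖x - y‖ * ‖x - y‖ ≤ ‖x‖ * ‖x‖ + ‖y‖ * ‖y‖ - ‖x‖ * ‖y‖ := by
    nlinarith [mul_nonneg (norm_nonneg x) (norm_nonneg y)]
  rcases le_total ‖x‖ ‖y‖ with hxy | hxy
  · nlinarith [mul_le_mul_of_nonneg_left hxy (norm_nonneg x),
      mul_self_lt_mul_self (norm_nonneg y) hy]
  · nlinarith [mul_le_mul_of_nonneg_left hxy (norm_nonneg y),
      mul_self_lt_mul_self (norm_nonneg x) hx]

variable [Fact (finrank ℝ V = 2)]

theorem exists_ne_angle_le_pi_div_three (v : Fin 6 → V) (hv : ∀ a, v a ≠ 0) :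
    ∃ a b, a ≠ b ∧ angle (v a) (v b) ≤ π / 3 := by
  have := FiniteDimensional.of_fact_finrank_eq_two (K := ℝ) (V := V)
  let o : Orientation ℝ V (Fin 2) := (finBasisOfFinrankEq ℝ V Fact.out).orientation
  obtain ⟨a, b, hab, h⟩ :=
    Real.Angle.exists_ne_abs_toReal_sub_le fun a => o.oangle (v 0) (v a)
  refine ⟨b, a, hab.symm, ?_⟩
  rwa [o.angle_eq_abs_oangle_toReal (hv b) (hv a), ← o.oangle_sub_left (hv 0) (hv b) (hv a)]

theorem not_forall_norm_lt_norm_sub (v : Fin 6 → V) :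
    ¬ ∀ a b, a ≠ b → ‖v a‖ < ‖v a - v b‖ := by
  intro h
  have hv : ∀ a, v a ≠ 0 := by
    intro a ha
    obtain ⟨b, hb⟩ := exists_ne a
    simpa [ha] using h b a hb
  obtain ⟨a, b, hab, hangle⟩ := exists_ne_angle_le_pi_div_three v hv
  refine hangle.not_gt (pi_div_three_lt_angle_of_norm_lt_norm_sub (h a b hab) ?_)
  rw [norm_sub_rev]
  exact h b a hab.symm

end Plane

section RNG

variable {n : ℕ} {p : Fin n → EuclideanSpace ℝ (Fin 2)} {i j k : Fin n}

theorem rngGraph.dist_le_of_adj (hij : (rngGraph n p).Adj i j)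
    (hk : dist (p i) (p k) < dist (p i) (p j)) : dist (p i) (p j) ≤ dist (p j) (p k) := by
  by_contra! hjk
  simp only [rngGraph, SimpleGraph.fromRel_adj, dist_eq_norm] at hij hk hjk
  rcases hij.2 with h | h
  · exact h ⟨k, hk, hjk⟩
  · exact h ⟨k, by rwa [norm_sub_rev (p j) (p i)], by rwa [norm_sub_rev (p j) (p i)]⟩

theorem rngGraph.dist_lt_dist_of_adj_of_adj
    (hdist : ∀ i j k l : Fin n, i ≠ j → k ≠ l →
      dist (p i) (p j) = dist (p k) (p l) → (i = k ∧ j = l) ∨ (i = l ∧ j = k))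
    (hij : (rngGraph n p).Adj i j) (hik : (rngGraph n p).Adj i k) (hjk : j ≠ k) :
    dist (p j) (p i) < dist (p j) (p k) := by
  rcases lt_trichotomy (dist (p i) (p k)) (dist (p i) (p j)) with hlt | heq | hgt
  · refine lt_of_le_of_ne (dist_comm (p i) (p j) ▸ dist_le_of_adj hij hlt) fun h => ?_
    rcases hdist j i j k hij.ne.symm hjk h with ⟨-, rfl⟩ | ⟨rfl, -⟩
    exacts [hik.ne rfl, hjk rfl]
  · exfalso
    rcases hdist i k i j hik.ne hij.ne heq with ⟨-, rfl⟩ | ⟨rfl, -⟩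
    exacts [hjk rfl, hij.ne rfl]
  · calc dist (p j) (p i) = dist (p i) (p j) := dist_comm _ _
      _ < dist (p i) (p k) := hgt
      _ ≤ dist (p k) (p j) := dist_le_of_adj hik hgt
      _ = dist (p j) (p k) := dist_comm _ _

end RNG

theorem rng_degree_le_five_general (n : ℕ) (p : Fin n → EuclideanSpace ℝ (Fin 2))
    (hdist : ∀ i j k l : Fin n, i ≠ j → k ≠ l →
      dist (p i) (p j) = dist (p k) (p l) → (i = k ∧ j = l) ∨ (i = l ∧ j = k))
    (i : Fin n) :
    {j : Fin n | (rngGraph n p).Adj i j}.ncard ≤ 5 := by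
  classical
  by_contra! h
  have : Fintype.card (Fin 6) ≤ Fintype.card {j : Fin n | (rngGraph n p).Adj i j} := by
    rw [Fintype.card_fin, ← Nat.card_eq_fintype_card, Nat.card_coe_set_eq]
    exact h
  obtain ⟨f⟩ := Function.Embedding.nonempty_of_card_le this
  have : Fact (finrank ℝ (EuclideanSpace ℝ (Fin 2)) = 2) := ⟨finrank_euclideanSpace_fin⟩
  refine not_forall_norm_lt_norm_sub (fun a => p (f a) - p i) fun a b hab => ?_
  simpa [dist_eq_norm] using rngGraph.dist_lt_dist_of_adj_of_adj hdist (f a).2 (f b).2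
    (Subtype.coe_injective.ne (f.injective.ne hab))

/-- in the RNG with pairwise distinct distances every vertex has
degree at most 5. -/
theorem rng_degree_le_five (n : ℕ) (p : Fin n → EuclideanSpace ℝ (Fin 2))
    (hinj : Function.Injective p)
    (hdist : ∀ i j k l : Fin n, i ≠ j → k ≠ l →
      dist (p i) (p j) = dist (p k) (p l) → (i = k ∧ j = l) ∨ (i = l ∧ j = k))
    (i : Fin n) :
    {j : Fin n | (rngGraph n p).Adj i j}.ncard ≤ 5 :=
  rng_degree_le_five_general n p hdist i
end

section
/- If i and j are a closest pair between two nonempty disjoint sets V₁, V₂ partitioning the vertices, ‖p_i − p_j‖ ≤ V, and there exists k with ‖p_i − p_k‖ < ‖p_i − p_j‖ and ‖p_j − p_k‖ < ‖p_i − p_j‖, then k yields a pair across the partition strictly closer than (i,j) — a contradiction. Hence some closest cross pair at distance ≤ V must be an effective edge. -/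
/-- a closest cross pair of a partition at distance `≤ V` admits no
lens witness, i.e. it is an effective edge. -/
theorem closest_cross_pair_effective (n : ℕ) (p : Fin n → EuclideanSpace ℝ (Fin 2))
    (V : ℝ) (hV : 0 < V) (V1 V2 : Set (Fin n))
    (h1 : V1.Nonempty) (h2 : V2.Nonempty) (hdisj : Disjoint V1 V2)
    (hcover : V1 ∪ V2 = Set.univ)
    (i j : Fin n) (hi : i ∈ V1) (hj : j ∈ V2)
    (hclosest : ∀ i' ∈ V1, ∀ j' ∈ V2, ‖p i - p j‖ ≤ ‖p i' - p j'‖)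
    (hV' : ‖p i - p j‖ ≤ V) :
    ¬ ∃ k : Fin n, ‖p i - p k‖ < ‖p i - p j‖ ∧ ‖p j - p k‖ < ‖p i - p j‖ := by
  rintro ⟨k, hik, hjk⟩
  have hk : k ∈ V1 ∪ V2 := hcover ▸ Set.mem_univ k
  cases hk with
  | inl hk =>
    have := hclosest k hk j hj
    rw [show ‖p j - p k‖ = ‖p k - p j‖ from norm_sub_rev _ _] at hjk
    linarith
  | inr hk =>
    have := hclosest i hi k hk
    linarith
end

section
/- RNG Plus connectivity: fix m ≥ 0 and define edge {i,j} (with ‖p_i − p_j‖ ≤ V) to be kept iff the number of points k with ‖p_i − p_k‖ < ‖p_i − p_j‖ and ‖p_j − p_k‖ < ‖p_i − p_j‖ is at most m. If the visibility graph is connected, this RNG-Plus subgraph is connected. -/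
/-- The RNG-Plus subgraph: keep a visibility edge iff its lens contains at most
`m` other points. -/
def rngPlusGraph (n : ℕ) (p : Fin n → EuclideanSpace ℝ (Fin 2)) (V : ℝ) (m : ℕ) :
    SimpleGraph (Fin n) :=
  SimpleGraph.fromRel (fun i j => ‖p i - p j‖ ≤ V ∧
    {k : Fin n | ‖p i - p k‖ < ‖p i - p j‖ ∧ ‖p j - p k‖ < ‖p i - p j‖}.ncard ≤ m)

lemma rngPlus_key (n : ℕ) (p : Fin n → EuclideanSpace ℝ (Fin 2)) (V : ℝ) (m : ℕ) :
    ∀ N : ℕ, ∀ i j : Fin n, i ≠ j → ‖p i - p j‖ ≤ V →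
      (Finset.univ.filter
        (fun q : Fin n × Fin n => ‖p q.1 - p q.2‖ < ‖p i - p j‖)).card ≤ N →
      (rngPlusGraph n p V m).Reachable i j := by
  intro N
  induction N with
  | zero =>
    intro i j hij hVij hcard
    by_cases hlens :
        {k : Fin n | ‖p i - p k‖ < ‖p i - p j‖ ∧ ‖p j - p k‖ < ‖p i - p j‖}.ncard ≤ m
    · exact SimpleGraph.Adj.reachable
        ((SimpleGraph.fromRel_adj _ i j).mpr ⟨hij, Or.inl ⟨hVij, hlens⟩⟩)
    · -- lens nonempty, so filter card ≥ 1, contradiction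
      exfalso
      have hne : {k : Fin n | ‖p i - p k‖ < ‖p i - p j‖ ∧
          ‖p j - p k‖ < ‖p i - p j‖}.Nonempty := by
        apply Set.nonempty_of_ncard_ne_zero
        omega
      obtain ⟨k, hk1, hk2⟩ := hne
      have : (i, k) ∈ Finset.univ.filter
          (fun q : Fin n × Fin n => ‖p q.1 - p q.2‖ < ‖p i - p j‖) := by
        simp [hk1]
      have := Finset.card_pos.mpr ⟨_, this⟩
      omega
  | succ N ih =>
    intro i j hij hVij hcard
    by_cases hlens :
        {k : Fin n | ‖p i - p k‖ < ‖p i - p j‖ ∧ ‖p j - p k‖ < ‖p i - p j‖}.ncard ≤ m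
    · exact SimpleGraph.Adj.reachable
        ((SimpleGraph.fromRel_adj _ i j).mpr ⟨hij, Or.inl ⟨hVij, hlens⟩⟩)
    · have hne : {k : Fin n | ‖p i - p k‖ < ‖p i - p j‖ ∧
          ‖p j - p k‖ < ‖p i - p j‖}.Nonempty := by
        apply Set.nonempty_of_ncard_ne_zero
        omega
      obtain ⟨k, hk1, hk2⟩ := hne
      have hki : k ≠ i := by
        rintro rfl
        rw [norm_sub_rev] at hk2
        exact lt_irrefl _ hk2
      have hkj : k ≠ j := by
        rintro rfl
        exact lt_irrefl _ hk1
      -- strict decrease of counts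
      have hsub : ∀ d : ℝ, d < ‖p i - p j‖ → ∀ a b : Fin n, ‖p a - p b‖ < d →
          ‖p a - p b‖ < ‖p i - p j‖ := fun d hd a b h => h.trans hd
      have hstep : ∀ (a b : Fin n), ‖p a - p b‖ < ‖p i - p j‖ →
          (Finset.univ.filter
            (fun q : Fin n × Fin n => ‖p q.1 - p q.2‖ < ‖p a - p b‖)).card ≤ N := by
        intro a b hab
        have hss : Finset.univ.filter
              (fun q : Fin n × Fin n => ‖p q.1 - p q.2‖ < ‖p a - p b‖) ⊂
            Finset.univ.filter
              (fun q : Fin n × Fin n => ‖p q.1 - p q.2‖ < ‖p i - p j‖) := by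
          constructor
          · intro q hq
            simp only [Finset.mem_filter, Finset.mem_univ, true_and] at hq ⊢
            exact hq.trans hab
          · intro h
            have : (a, b) ∈ Finset.univ.filter
                (fun q : Fin n × Fin n => ‖p q.1 - p q.2‖ < ‖p a - p b‖) := by
              apply h
              simp [hab]
            simp at this
        have := Finset.card_lt_card hss
        omega
      have h1 : (rngPlusGraph n p V m).Reachable i k := by
        apply ih i k (Ne.symm hki) (le_of_lt (hk1.trans_le hVij))
        exact hstep i k hk1
      have h2 : (rngPlusGraph n p V m).Reachable j k := by
        apply ih j k (Ne.symm hkj) (le_of_lt (hk2.trans_le hVij))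
        exact hstep j k hk2
      exact h1.trans h2.symm

/-- connectivity of the visibility graph implies connectivity of the
RNG-Plus subgraph. -/
theorem rngPlus_connected (n : ℕ) (p : Fin n → EuclideanSpace ℝ (Fin 2))
    (V : ℝ) (hV : 0 < V) (m : ℕ) (hconn : (visGraph n p V).Connected) :
    (rngPlusGraph n p V m).Connected := by
  have hadj : ∀ a b : Fin n, (visGraph n p V).Adj a b →
      (rngPlusGraph n p V m).Reachable a b := by
    intro a b hab
    rw [visGraph, SimpleGraph.fromRel_adj] at hab
    obtain ⟨hne, h | h⟩ := hab
    · exact rngPlus_key n p V m _ a b hne h le_rfl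
    · rw [norm_sub_rev] at h
      exact rngPlus_key n p V m _ a b hne h le_rfl
  have hnonempty : Nonempty (Fin n) := hconn.nonempty
  rw [SimpleGraph.connected_iff]
  refine ⟨fun i j => ?_, hnonempty⟩
  obtain ⟨w⟩ := hconn.preconnected i j
  induction w with
  | nil => exact SimpleGraph.Reachable.refl _
  | cons ha _ ihw => exact (hadj _ _ ha).trans ihw
end

section
/- A minimum-weight spanning tree of the complete Euclidean graph on a finite planar point set (with distinct pairwise distances) is a subgraph of the relative neighbourhood graph; in particular the RNG has at least n − 1 edges when n ≥ 1. -/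
open scoped Classical in
/-- Total Euclidean weight of a graph on the points `p`. -/
noncomputable def euclWeight (n : ℕ) (p : Fin n → EuclideanSpace ℝ (Fin 2))
    (G : SimpleGraph (Fin n)) : ℝ :=
  ∑ e ∈ Finset.univ.filter (fun e : Sym2 (Fin n) => e ∈ G.edgeSet),
    Sym2.lift ⟨fun i j => dist (p i) (p j), fun i j => dist_comm (p i) (p j)⟩ e

/-!
If a tree edge `ij` of a minimum spanning tree had a point `k` closer to both `i` and `j`,
delete `ij`: `k` falls on the side of one endpoint, say `j`, and the edge `ik` reconnects the two
sides into a strictly lighter spanning tree. The edge count follows because a tree on `n` vertices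
has `n - 1` edges.
-/

namespace SimpleGraph

variable {V : Type*} {G T : SimpleGraph V} {i j k : V}

theorem Connected.reachable_deleteEdges_or_reachable (hG : G.Connected) (u v w : V) :
    (G.deleteEdges {s(u, v)}).Reachable u w ∨ (G.deleteEdges {s(u, v)}).Reachable v w := by
  set H := G.deleteEdges {s(u, v)}
  suffices ∀ {x y : V} (q : G.Walk x y), (H.Reachable u x ∨ H.Reachable v x) →
      H.Reachable u y ∨ H.Reachable v y from
    this (hG.preconnected u w).some (.inl .rfl)
  intro x y q
  induction q with
  | nil => exact id
  | @cons x y z hxy _ ih =>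
    refine fun hx => ih ?_
    by_cases he : s(x, y) = s(u, v)
    · rcases Sym2.eq_iff.mp he with ⟨-, rfl⟩ | ⟨-, rfl⟩
      exacts [.inr .rfl, .inl .rfl]
    · have hH : H.Adj x y := deleteEdges_adj.2 ⟨hxy, he⟩
      exact hx.imp (·.trans hH.reachable) (·.trans hH.reachable)

theorem edgeSet_deleteEdges_sup_edge (hik : i ≠ k) :
    (G.deleteEdges {s(i, j)} ⊔ edge i k).edgeSet = insert s(i, k) (G.edgeSet \ {s(i, j)}) := by
  rw [edgeSet_sup, edgeSet_deleteEdges, edgeSet_edge_of_ne hik, Set.union_singleton]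

theorem not_adj_of_not_reachable_deleteEdges (hkj : k ≠ j)
    (hk : ¬(G.deleteEdges {s(i, j)}).Reachable i k) : ¬G.Adj i k := fun h =>
  hk (deleteEdges_adj.2 ⟨h, by rwa [Set.mem_singleton_iff, Sym2.congr_right]⟩).reachable

theorem IsTree.deleteEdges_sup_edge [Finite V] (hT : T.IsTree) (hij : T.Adj i j) (hkj : k ≠ j)
    (hk : ¬(T.deleteEdges {s(i, j)}).Reachable i k) :
    (T.deleteEdges {s(i, j)} ⊔ edge i k).IsTree := by
  set T₀ := T.deleteEdges {s(i, j)}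
  have hik : i ≠ k := by rintro rfl; exact hk .rfl
  have hTik : s(i, k) ∉ T.edgeSet := not_adj_of_not_reachable_deleteEdges hkj hk
  have hjk : T₀.Reachable j k :=
    (hT.connected.reachable_deleteEdges_or_reachable i j k).resolve_left hk
  rw [isTree_iff_connected_and_card, edgeSet_deleteEdges_sup_edge hik]
  refine ⟨(connected_iff_exists_forall_reachable _).2 ⟨i, fun w => ?_⟩, ?_⟩
  · have hadj : (T₀ ⊔ edge i k).Adj i k := Or.inr (by simp [edge_adj, hik])
    rcases hT.connected.reachable_deleteEdges_or_reachable i j w with h | h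
    · exact h.mono le_sup_left
    · exact hadj.reachable.trans ((hjk.symm.trans h).mono le_sup_left)
  · rw [Nat.card_coe_set_eq, Set.ncard_insert_of_notMem (fun h => hTik h.1),
      Set.ncard_sdiff_singleton_add_one (T.mem_edgeSet.2 hij), ← Nat.card_coe_set_eq]
    exact (isTree_iff_connected_and_card.mp hT).2

section Weight

variable [Fintype V] [DecidableEq V] (w : Sym2 V → ℝ)

open scoped Classical in
noncomputable def totalWeight (G : SimpleGraph V) : ℝ :=
  ∑ e ∈ Finset.univ.filter (fun e : Sym2 V => e ∈ G.edgeSet), w e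

variable {w}

theorem totalWeight_add_of_edgeSet_eq_insert_sdiff {G G' : SimpleGraph V} {a b : Sym2 V}
    (h : G'.edgeSet = insert b (G.edgeSet \ {a})) (ha : a ∈ G.edgeSet) (hb : b ∉ G.edgeSet) :
    G'.totalWeight w + w a = G.totalWeight w + w b := by
  classical
  have hfilter : Finset.univ.filter (· ∈ G'.edgeSet)
      = insert b ((Finset.univ.filter (· ∈ G.edgeSet)).erase a) := by
    ext e
    simp only [h, Finset.mem_filter, Finset.mem_univ, true_and, Finset.mem_insert,
      Finset.mem_erase, Set.mem_insert_iff, Set.mem_sdiff, Set.mem_singleton_iff]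
    tauto
  unfold totalWeight
  rw [hfilter, Finset.sum_insert (by simp [hb]), add_assoc,
    Finset.sum_erase_add _ w (by simpa using ha), add_comm]

/-- The cycle property of minimum spanning trees. -/
theorem IsTree.exists_isTree_totalWeight_lt (hT : T.IsTree) (hij : T.Adj i j)
    (hik : w s(i, k) < w s(i, j)) (hjk : w s(j, k) < w s(i, j)) :
    ∃ T' : SimpleGraph V, T'.IsTree ∧ T'.totalWeight w < T.totalWeight w := by
  -- `ij` is a bridge, so `k` is not on both of its sides.
  wlog hk : ¬(T.deleteEdges {s(i, j)}).Reachable i k generalizing i j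
  · have hbridge : ¬(T.deleteEdges {s(i, j)}).Reachable i j :=
      isAcyclic_iff_forall_adj_isBridge.mp hT.isAcyclic hij
    rw [Sym2.eq_swap (a := i) (b := j)] at hik hjk hk hbridge
    exact this hij.symm hjk hik fun hjk' => hbridge ((not_not.1 hk).trans hjk'.symm)
  have hkj : k ≠ j := by rintro rfl; exact hik.false
  have hne : i ≠ k := by rintro rfl; exact hk .rfl
  refine ⟨_, hT.deleteEdges_sup_edge hij hkj hk, ?_⟩
  have := totalWeight_add_of_edgeSet_eq_insert_sdiff (w := w) (edgeSet_deleteEdges_sup_edge hne)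
    hij (not_adj_of_not_reachable_deleteEdges hkj hk)
  linarith

end Weight

end SimpleGraph

theorem mst_subgraph_rng_general (n : ℕ) (p : Fin n → EuclideanSpace ℝ (Fin 2))
    (T : SimpleGraph (Fin n)) (hT : T.IsTree)
    (hmin : ∀ T' : SimpleGraph (Fin n), T'.IsTree →
      euclWeight n p T ≤ euclWeight n p T') :
    T ≤ rngGraph n p ∧ (1 ≤ n → n - 1 ≤ (rngGraph n p).edgeSet.ncard) := by
  let w : Sym2 (Fin n) → ℝ :=
    Sym2.lift ⟨fun i j => dist (p i) (p j), fun i j => dist_comm (p i) (p j)⟩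
  have hle : T ≤ rngGraph n p := fun i j hij => by
    refine (SimpleGraph.fromRel_adj _ _ _).2 ⟨hij.ne, .inl ?_⟩
    rintro ⟨k, hik, hjk⟩
    obtain ⟨T', hT', hlt⟩ := hT.exists_isTree_totalWeight_lt (w := w) hij
      (by simpa [w, dist_eq_norm] using hik) (by simpa [w, dist_eq_norm] using hjk)
    exact (hmin T' hT').not_gt hlt
  refine ⟨hle, fun _ => ?_⟩
  have hcard := (SimpleGraph.isTree_iff_connected_and_card.mp hT).2
  rw [Nat.card_coe_set_eq, Nat.card_eq_fintype_card, Fintype.card_fin] at hcard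
  have := Set.ncard_le_ncard (SimpleGraph.edgeSet_mono hle)
  omega

/-- a minimum-weight spanning tree is a subgraph of the RNG; hence
the RNG has at least `n − 1` edges when `n ≥ 1`. -/
theorem mst_subgraph_rng (n : ℕ) (p : Fin n → EuclideanSpace ℝ (Fin 2))
    (hinj : Function.Injective p)
    (hdist : ∀ i j k l : Fin n, i ≠ j → k ≠ l →
      dist (p i) (p j) = dist (p k) (p l) → (i = k ∧ j = l) ∨ (i = l ∧ j = k))
    (T : SimpleGraph (Fin n)) (hT : T.IsTree)
    (hmin : ∀ T' : SimpleGraph (Fin n), T'.IsTree →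
      euclWeight n p T ≤ euclWeight n p T') :
    T ≤ rngGraph n p ∧ (1 ≤ n → n - 1 ≤ (rngGraph n p).edgeSet.ncard) :=
  mst_subgraph_rng_general n p T hT hmin
end
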